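/- Let H₁ and H₂ be separable complex Hilbert spaces, and let (X₁, μ₁), (X₂, μ₂) be σ-finite positive measure spaces. Suppose F₁ : X₁ → H₁ is a Parseval continuous frame for H₁ and F₂ : X₂ → H₂ is a continuous frame for H₂ that does norm retrieval. Then the tensor product frame F : X₁ × X₂ → H₁ ⊗ H₂ defined by F(x₁, x₂) = F₁(x₁) ⊗ F₂(x₂) does norm retrieval for H₁ ⊗ H₂ (with respect to μ₁ ⊗ μ₂). -/

import Mathlib

open MeasureTheory ENNReal
open scoped NNReal ComplexInnerProductSpace

/-- `F : X → H` is a continuous frame with bounds `0 < A ≤ B` for a complex Hilbert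
space. -/
def IsContinuousFrame {X H : Type*} [MeasurableSpace X]
    [NormedAddCommGroup H] [InnerProductSpace ℂ H]
    (μ : Measure X) (F : X → H) (A B : ℝ) : Prop :=
  0 < A ∧ A ≤ B ∧
  (∀ f : H, Measurable fun x => ⟪f, F x⟫) ∧
  ∀ f : H,
    ENNReal.ofReal (A * ‖f‖ ^ 2) ≤ ∫⁻ x, (‖⟪f, F x⟫‖₊ : ℝ≥0∞) ^ 2 ∂μ ∧
    ∫⁻ x, (‖⟪f, F x⟫‖₊ : ℝ≥0∞) ^ 2 ∂μ ≤ ENNReal.ofReal (B * ‖f‖ ^ 2)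

/-- `F` does norm retrieval if `‖⟪f, F x⟫‖ = ‖⟪g, F x⟫‖` μ-a.e. forces `‖f‖ = ‖g‖`. -/
def DoesNormRetrieval {X H : Type*} [MeasurableSpace X]
    [NormedAddCommGroup H] [InnerProductSpace ℂ H]
    (μ : Measure X) (F : X → H) : Prop :=
  ∀ f g : H, (∀ᵐ x ∂μ, ‖⟪f, F x⟫‖ = ‖⟪g, F x⟫‖) → ‖f‖ = ‖g‖

/-- `H` together with a continuous bilinear map `tmul : H₁ → H₂ → H` is the Hilbert
space tensor product `H₁ ⊗ H₂` when `⟪f₁ ⊗ f₂, g₁ ⊗ g₂⟫ = ⟪f₁, g₁⟫ ⟪f₂, g₂⟫` and the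
span of the elementary tensors is dense in `H`. -/
structure IsHilbertTensorProduct {H₁ H₂ H : Type*}
    [NormedAddCommGroup H₁] [InnerProductSpace ℂ H₁]
    [NormedAddCommGroup H₂] [InnerProductSpace ℂ H₂]
    [NormedAddCommGroup H] [InnerProductSpace ℂ H]
    (tmul : H₁ →L[ℂ] H₂ →L[ℂ] H) : Prop where
  inner_tmul : ∀ (f₁ g₁ : H₁) (f₂ g₂ : H₂),
    ⟪tmul f₁ f₂, tmul g₁ g₂⟫ = ⟪f₁, g₁⟫ * ⟪f₂, g₂⟫
  dense_span :
    (Submodule.span ℂ (Set.range fun p : H₁ × H₂ => tmul p.1 p.2)).topologicalClosure = ⊤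

/-- An orthonormal family in a separable space has countable index type. -/
lemma aux_orthonormal_countable {ι E : Type*} [NormedAddCommGroup E]
    [InnerProductSpace ℂ E] [TopologicalSpace.SeparableSpace E]
    {v : ι → E} (hv : Orthonormal ℂ v) : Countable ι := by
  have hdist : ∀ i j : ι, i ≠ j → (1 : ℝ) < dist (v i) (v j) := by
    intro i j hij
    have h1 : ‖v i - v j‖ ^ 2 = 2 := by
      have h := @norm_sub_sq ℂ E _ _ _ (v i) (v j)
      rw [hv.2 hij] at h
      simp only [map_zero, mul_zero, sub_zero] at h
      rw [h, hv.1 i, hv.1 j]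
      norm_num
    rw [dist_eq_norm]
    nlinarith [norm_nonneg (v i - v j)]
  apply Pairwise.countable_of_isOpen_disjoint (s := fun i => Metric.ball (v i) (1/2))
  · intro i j hij
    apply Metric.ball_disjoint_ball
    have := hdist i j hij
    linarith
  · intro i; exact Metric.isOpen_ball
  · intro i; exact Metric.nonempty_ball.2 (by norm_num)

/-- Parseval identity for a Hilbert basis, `ℝ≥0∞`-valued. -/
lemma aux_parseval {ι E : Type*} [NormedAddCommGroup E] [InnerProductSpace ℂ E]
    [CompleteSpace E] (b : HilbertBasis ι ℂ E) (v : E) :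
    ∑' i, (‖⟪v, b i⟫‖₊ : ℝ≥0∞) ^ 2 = ENNReal.ofReal (‖v‖ ^ 2) := by
  have h0 : HasSum (fun i => ⟪v, b i⟫ * ⟪b i, v⟫) ⟪v, v⟫ := b.hasSum_inner_mul_inner v v
  have h1 : HasSum (fun i => ‖⟪v, b i⟫‖ ^ 2) (‖v‖ ^ 2) := by
    have h2 := h0.mapL Complex.reCLM
    have h3 : ∀ i, Complex.reCLM (⟪v, b i⟫ * ⟪b i, v⟫) = ‖⟪v, b i⟫‖ ^ 2 := by
      intro i
      rw [← inner_conj_symm (b i) v, Complex.mul_conj, Complex.reCLM_apply,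
        Complex.ofReal_re, Complex.normSq_eq_norm_sq]
    have h4 : Complex.reCLM ⟪v, v⟫ = ‖v‖ ^ 2 := by
      simpa using inner_self_eq_norm_sq (𝕜 := ℂ) v
    rw [h4] at h2
    exact (funext h3 : _) ▸ h2
  have h5 : ∑' i, ENNReal.ofReal (‖⟪v, b i⟫‖ ^ 2) = ENNReal.ofReal (‖v‖ ^ 2) := by
    rw [← ENNReal.ofReal_tsum_of_nonneg (fun i => sq_nonneg _) h1.summable, h1.tsum_eq]
  rw [← h5]
  apply tsum_congr
  intro i
  rw [← enorm_eq_nnnorm, ← ofReal_norm, ← ENNReal.ofReal_pow (norm_nonneg _)]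

/-- The elementary tensors built from two Hilbert bases form a Hilbert basis of the
tensor product. -/
lemma aux_tensor_basis {ι₁ ι₂ H₁ H₂ H : Type*}
    [NormedAddCommGroup H₁] [InnerProductSpace ℂ H₁] [CompleteSpace H₁]
    [NormedAddCommGroup H₂] [InnerProductSpace ℂ H₂] [CompleteSpace H₂]
    [NormedAddCommGroup H] [InnerProductSpace ℂ H] [CompleteSpace H]
    (tmul : H₁ →L[ℂ] H₂ →L[ℂ] H) (htmul : IsHilbertTensorProduct tmul)
    (b₁ : HilbertBasis ι₁ ℂ H₁) (b₂ : HilbertBasis ι₂ ℂ H₂) :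
    ∃ b : HilbertBasis (ι₁ × ι₂) ℂ H, ∀ p : ι₁ × ι₂, b p = tmul (b₁ p.1) (b₂ p.2) := by
  classical
  have horth : Orthonormal ℂ (fun p : ι₁ × ι₂ => tmul (b₁ p.1) (b₂ p.2)) := by
    rw [orthonormal_iff_ite]
    intro p q
    rw [htmul.inner_tmul]
    have h1 := orthonormal_iff_ite.1 b₁.orthonormal p.1 q.1
    have h2 := orthonormal_iff_ite.1 b₂.orthonormal p.2 q.2
    rw [h1, h2]
    by_cases ha : p.1 = q.1 <;> by_cases hb2 : p.2 = q.2 <;>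
      simp [Prod.ext_iff, ha, hb2]
  have hsp : ⊤ ≤ (Submodule.span ℂ (Set.range fun p : ι₁ × ι₂ =>
      tmul (b₁ p.1) (b₂ p.2))).topologicalClosure := by
    set M := (Submodule.span ℂ (Set.range fun p : ι₁ × ι₂ =>
      tmul (b₁ p.1) (b₂ p.2))).topologicalClosure with hM
    have hMclosed : IsClosed (M : Set H) := Submodule.isClosed_topologicalClosure _
    have step1 : ∀ (i : ι₁) (y : H₂), tmul (b₁ i) y ∈ M := by
      intro i y
      have hsub : Submodule.span ℂ (Set.range b₂) ≤ M.comap (tmul (b₁ i)).toLinearMap := by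
        rw [Submodule.span_le]
        rintro - ⟨j, rfl⟩
        exact Submodule.le_topologicalClosure _ (Submodule.subset_span ⟨(i, j), rfl⟩)
      have hcl : IsClosed ((M.comap (tmul (b₁ i)).toLinearMap : Submodule ℂ H₂) : Set H₂) :=
        hMclosed.preimage (tmul (b₁ i)).continuous
      have := (Submodule.span ℂ (Set.range b₂)).topologicalClosure_minimal hsub hcl
      rw [b₂.dense_span] at this
      exact this Submodule.mem_top
    have step2 : ∀ (x : H₁) (y : H₂), tmul x y ∈ M := by
      intro x y
      have hsub : Submodule.span ℂ (Set.range b₁) ≤ M.comap (tmul.flip y).toLinearMap := by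
        rw [Submodule.span_le]
        rintro - ⟨i, rfl⟩
        exact step1 i y
      have hcl : IsClosed ((M.comap (tmul.flip y).toLinearMap : Submodule ℂ H₁) : Set H₁) :=
        hMclosed.preimage (tmul.flip y).continuous
      have := (Submodule.span ℂ (Set.range b₁)).topologicalClosure_minimal hsub hcl
      rw [b₁.dense_span] at this
      exact this Submodule.mem_top
    have hall : (Submodule.span ℂ
        (Set.range fun p : H₁ × H₂ => tmul p.1 p.2)).topologicalClosure ≤ M := by
      apply Submodule.topologicalClosure_minimal _ _ hMclosed
      rw [Submodule.span_le]
      rintro - ⟨p, rfl⟩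
      exact step2 p.1 p.2
    rw [htmul.dense_span] at hall
    exact hall
  exact ⟨HilbertBasis.mk horth hsp, fun p => congrFun (HilbertBasis.coe_mk horth hsp) p⟩

/-- Let `H₁, H₂` be separable complex Hilbert spaces and `(X₁, μ₁)`,
`(X₂, μ₂)` σ-finite positive measure spaces. Suppose `F₁ : X₁ → H₁` is a Parseval
continuous frame for `H₁` and `F₂ : X₂ → H₂` is a continuous frame for `H₂` that does
norm retrieval. Then the tensor product frame `F : X₁ × X₂ → H₁ ⊗ H₂`,
`F (x₁, x₂) = F₁ x₁ ⊗ F₂ x₂`, does norm retrieval for `H₁ ⊗ H₂` (with respect to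
`μ₁ ⊗ μ₂`). -/
theorem stmt_16 {X₁ X₂ H₁ H₂ H : Type*}
    [MeasurableSpace X₁] [MeasurableSpace X₂]
    [NormedAddCommGroup H₁] [InnerProductSpace ℂ H₁] [CompleteSpace H₁]
    [TopologicalSpace.SeparableSpace H₁]
    [NormedAddCommGroup H₂] [InnerProductSpace ℂ H₂] [CompleteSpace H₂]
    [TopologicalSpace.SeparableSpace H₂]
    [NormedAddCommGroup H] [InnerProductSpace ℂ H] [CompleteSpace H]
    [TopologicalSpace.SeparableSpace H]
    (tmul : H₁ →L[ℂ] H₂ →L[ℂ] H)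
    (htmul : IsHilbertTensorProduct tmul)
    (μ₁ : Measure X₁) [SigmaFinite μ₁] (μ₂ : Measure X₂) [SigmaFinite μ₂]
    (F₁ : X₁ → H₁) (F₂ : X₂ → H₂)
    (hF₁ : IsContinuousFrame μ₁ F₁ 1 1)
    (A₂ B₂ : ℝ)
    (hF₂ : IsContinuousFrame μ₂ F₂ A₂ B₂)
    (hF₂nr : DoesNormRetrieval μ₂ F₂) :
    DoesNormRetrieval (μ₁.prod μ₂)
      (fun p : X₁ × X₂ => tmul (F₁ p.1) (F₂ p.2)) := by
  classical
  -- Hilbert bases of H₁ and H₂, countable by separability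
  obtain ⟨w₁, b₁, hb₁⟩ := exists_hilbertBasis ℂ H₁
  obtain ⟨w₂, b₂, hb₂⟩ := exists_hilbertBasis ℂ H₂
  have hc₁ : Countable w₁ := aux_orthonormal_countable b₁.orthonormal
  have hc₂ : Countable w₂ := aux_orthonormal_countable b₂.orthonormal
  obtain ⟨b, hb⟩ := aux_tensor_basis tmul htmul b₁ b₂
  -- the partial adjoint map
  set W : X₁ → H → H₂ := fun x₁ f => ContinuousLinearMap.adjoint (tmul (F₁ x₁)) f with hW
  have hWinner : ∀ (x₁ : X₁) (f : H) (k : H₂), ⟪W x₁ f, k⟫ = ⟪f, tmul (F₁ x₁) k⟫ := by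
    intro x₁ f k
    exact ContinuousLinearMap.adjoint_inner_left (tmul (F₁ x₁)) k f
  -- Key identity: ∫⁻ ofReal ‖W x₁ f‖² dμ₁ = ofReal ‖f‖²
  have key : ∀ f : H,
      ∫⁻ x₁, ENNReal.ofReal (‖W x₁ f‖ ^ 2) ∂μ₁ = ENNReal.ofReal (‖f‖ ^ 2) := by
    intro f
    -- the H₁-vectors v_j
    set v : w₂ → H₁ := fun j => ContinuousLinearMap.adjoint (tmul.flip (b₂ j)) f with hv
    have hvinner : ∀ (j : w₂) (h : H₁), ⟪v j, h⟫ = ⟪f, tmul h (b₂ j)⟫ := by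
      intro j h
      exact ContinuousLinearMap.adjoint_inner_left (tmul.flip (b₂ j)) h f
    calc ∫⁻ x₁, ENNReal.ofReal (‖W x₁ f‖ ^ 2) ∂μ₁
        = ∫⁻ x₁, ∑' j : w₂, (‖⟪v j, F₁ x₁⟫‖₊ : ℝ≥0∞) ^ 2 ∂μ₁ := by
          apply lintegral_congr
          intro x₁
          rw [← aux_parseval b₂ (W x₁ f)]
          apply tsum_congr
          intro j
          rw [hWinner, ← hvinner]
      _ = ∑' j : w₂, ∫⁻ x₁, (‖⟪v j, F₁ x₁⟫‖₊ : ℝ≥0∞) ^ 2 ∂μ₁ := by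
          apply lintegral_tsum
          intro j
          exact ((hF₁.2.2.1 (v j)).nnnorm.coe_nnreal_ennreal.pow_const 2).aemeasurable
      _ = ∑' j : w₂, ENNReal.ofReal (‖v j‖ ^ 2) := by
          apply tsum_congr
          intro j
          obtain ⟨hle, hge⟩ := hF₁.2.2.2 (v j)
          rw [one_mul] at hle hge
          exact le_antisymm hge hle
      _ = ∑' j : w₂, ∑' i : w₁, (‖⟪f, tmul (b₁ i) (b₂ j)⟫‖₊ : ℝ≥0∞) ^ 2 := by
          apply tsum_congr
          intro j
          rw [← aux_parseval b₁ (v j)]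
          apply tsum_congr
          intro i
          rw [hvinner]
      _ = ∑' p : w₁ × w₂, (‖⟪f, tmul (b₁ p.1) (b₂ p.2)⟫‖₊ : ℝ≥0∞) ^ 2 := by
          rw [ENNReal.tsum_prod
            (f := fun i j => (‖⟪f, tmul (b₁ i) (b₂ j)⟫‖₊ : ℝ≥0∞) ^ 2)]
          exact ENNReal.tsum_comm
      _ = ∑' p : w₁ × w₂, (‖⟪f, b p⟫‖₊ : ℝ≥0∞) ^ 2 := by
          apply tsum_congr; intro p
          rw [hb p]
      _ = ENNReal.ofReal (‖f‖ ^ 2) := aux_parseval b f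
  -- Now the main argument
  intro f g hae
  have hae' : ∀ᵐ x₁ ∂μ₁, ∀ᵐ x₂ ∂μ₂,
      ‖⟪W x₁ f, F₂ x₂⟫‖ = ‖⟪W x₁ g, F₂ x₂⟫‖ := by
    have := Measure.ae_ae_of_ae_prod hae
    filter_upwards [this] with x₁ h₁
    filter_upwards [h₁] with x₂ h₂
    rw [hWinner, hWinner]
    exact h₂
  have hnorm : ∀ᵐ x₁ ∂μ₁, ‖W x₁ f‖ = ‖W x₁ g‖ := by
    filter_upwards [hae'] with x₁ h₁
    exact hF₂nr _ _ h₁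
  have hint : ∫⁻ x₁, ENNReal.ofReal (‖W x₁ f‖ ^ 2) ∂μ₁
      = ∫⁻ x₁, ENNReal.ofReal (‖W x₁ g‖ ^ 2) ∂μ₁ := by
    apply lintegral_congr_ae
    filter_upwards [hnorm] with x₁ h₁
    rw [h₁]
  rw [key f, key g] at hint
  have hsq : ‖f‖ ^ 2 = ‖g‖ ^ 2 :=
    (ENNReal.ofReal_eq_ofReal_iff (sq_nonneg _) (sq_nonneg _)).1 hint
  rw [← Real.sqrt_sq (norm_nonneg f), ← Real.sqrt_sq (norm_nonneg g), hsq]
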